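/- No two of the eight canonical forms G₃, G₂, D₃, D₂, D₂′, D₂″, D₁, D₀ lie in the same orbit under the multi-TTM action of invertible 2×2 matrices: if G and G′ are distinct canonical forms from the list, then there exist no invertible 2×2 real matrices U, V, W with G ×₁ U ×₂ V ×₃ W = G′. -/
import Mathlib


/-- A `2 × 2 × 2` real tensor. -/
abbrev Tensor222 : Type := Fin 2 → Fin 2 → Fin 2 → ℝ

/-- The rank of a `2 × 2 × 2` tensor: the least `r` such that `T` is a sum of
`r` rank-one tensors. -/
noncomputable def tensorRank (T : Tensor222) : ℕ :=
  sInf {r : ℕ | ∃ a b c : Fin r → Fin 2 → ℝ,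
    T = fun i j k => ∑ l, a l i * b l j * c l k}
/-- The multi-TTM action: `(T ×₁ U ×₂ V ×₃ W)(α,β,γ) = ∑ U α i * V β j * W γ k * T i j k`. -/
def ttm (T : Tensor222) (U V W : Matrix (Fin 2) (Fin 2) ℝ) : Tensor222 :=
  fun α β γ => ∑ i, ∑ j, ∑ k, U α i * V β j * W γ k * T i j k
/-- Canonical form `G₃`: `t111 = 1, t122 = −1, t221 = 1, t212 = 1`. -/
def G3 : Tensor222 := ![![![1, 0], ![0, -1]], ![![0, 1], ![1, 0]]]

/-- Canonical form `G₂`: `t111 = 1, t222 = 1`. -/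
def G2 : Tensor222 := ![![![1, 0], ![0, 0]], ![![0, 0], ![0, 1]]]

/-- Canonical form `D₃`: `t111 = 1, t122 = 1, t212 = 1`. -/
def D3 : Tensor222 := ![![![1, 0], ![0, 1]], ![![0, 1], ![0, 0]]]

/-- Canonical form `D₂`: `t111 = 1, t221 = 1`. -/
def D2 : Tensor222 := ![![![1, 0], ![0, 0]], ![![0, 0], ![1, 0]]]

/-- Canonical form `D₂′`: `t111 = 1, t122 = 1`. -/
def D2' : Tensor222 := ![![![1, 0], ![0, 1]], ![![0, 0], ![0, 0]]]

/-- Canonical form `D₂″`: `t111 = 1, t212 = 1`. -/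
def D2'' : Tensor222 := ![![![1, 0], ![0, 0]], ![![0, 1], ![0, 0]]]

/-- Canonical form `D₁`: `t111 = 1`. -/
def D1 : Tensor222 := ![![![1, 0], ![0, 0]], ![![0, 0], ![0, 0]]]

/-- Canonical form `D₀`: the zero tensor. -/
def D0 : Tensor222 := ![![![0, 0], ![0, 0]], ![![0, 0], ![0, 0]]]

/-! ### Auxiliary machinery -/

lemma ttm_ttm (T : Tensor222) (U V W U' V' W' : Matrix (Fin 2) (Fin 2) ℝ) :
    ttm (ttm T U V W) U' V' W' = ttm T (U'*U) (V'*V) (W'*W) := by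
  funext i j k
  simp only [ttm, Matrix.mul_apply, Fin.sum_univ_two]
  ring

lemma ttm_one (T : Tensor222) : ttm T 1 1 1 = T := by
  funext i j k
  fin_cases i <;> fin_cases j <;> fin_cases k <;>
    simp [ttm, Fin.sum_univ_two, Matrix.one_apply]

lemma ttm_zero (U V W : Matrix (Fin 2) (Fin 2) ℝ) : ttm 0 U V W = 0 := by
  funext i j k
  simp [ttm]

/-- Mode-1 flattening has rank ≤ 1. -/
def P1 (T : Tensor222) : Prop :=
  ∃ (a : Fin 2 → ℝ) (M : Fin 2 → Fin 2 → ℝ), ∀ i j k, T i j k = a i * M j k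

/-- Mode-2 flattening has rank ≤ 1. -/
def P2 (T : Tensor222) : Prop :=
  ∃ (a : Fin 2 → ℝ) (M : Fin 2 → Fin 2 → ℝ), ∀ i j k, T i j k = a j * M i k

/-- Mode-3 flattening has rank ≤ 1. -/
def P3 (T : Tensor222) : Prop :=
  ∃ (a : Fin 2 → ℝ) (M : Fin 2 → Fin 2 → ℝ), ∀ i j k, T i j k = a k * M i j

lemma P1_ttm (T : Tensor222) (U V W : Matrix (Fin 2) (Fin 2) ℝ) (h : P1 T) :
    P1 (ttm T U V W) := by
  obtain ⟨a, M, hM⟩ := h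
  refine ⟨fun i => ∑ p, U i p * a p, fun j k => ∑ q, ∑ r, V j q * W k r * M q r, ?_⟩
  intro i j k
  simp only [ttm, hM, Fin.sum_univ_two]
  ring

lemma P2_ttm (T : Tensor222) (U V W : Matrix (Fin 2) (Fin 2) ℝ) (h : P2 T) :
    P2 (ttm T U V W) := by
  obtain ⟨a, M, hM⟩ := h
  refine ⟨fun j => ∑ q, V j q * a q, fun i k => ∑ p, ∑ r, U i p * W k r * M p r, ?_⟩
  intro i j k
  simp only [ttm, hM, Fin.sum_univ_two]
  ring

lemma P3_ttm (T : Tensor222) (U V W : Matrix (Fin 2) (Fin 2) ℝ) (h : P3 T) :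
    P3 (ttm T U V W) := by
  obtain ⟨a, M, hM⟩ := h
  refine ⟨fun k => ∑ r, W k r * a r, fun i j => ∑ p, ∑ q, U i p * V j q * M p q, ?_⟩
  intro i j k
  simp only [ttm, hM, Fin.sum_univ_two]
  ring

/-- `det (x•A + y•B)` for the mode-3 slices of `T`. -/
def quad (T : Tensor222) (x y : ℝ) : ℝ :=
  (x*T 0 0 0 + y*T 0 0 1)*(x*T 1 1 0 + y*T 1 1 1)
    - (x*T 0 1 0 + y*T 0 1 1)*(x*T 1 0 0 + y*T 1 0 1)

/-- (The negative of) Cayley's hyperdeterminant. -/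
def disc (T : Tensor222) : ℝ :=
  (quad T 1 1 - quad T 1 0 - quad T 0 1)^2 - 4*(quad T 1 0)*(quad T 0 1)

lemma disc_ttm (T : Tensor222) (U V W : Matrix (Fin 2) (Fin 2) ℝ) :
    disc (ttm T U V W) = (U.det*V.det*W.det)^2 * disc T := by
  obtain ⟨A, B, C, h2, hd⟩ :
      ∃ A B C : ℝ, (∀ x y : ℝ, quad T x y = A*x^2 + B*(x*y) + C*y^2)
        ∧ disc T = B^2 - 4*(A*C) := by
    refine ⟨quad T 1 0, quad T 1 1 - quad T 1 0 - quad T 0 1, quad T 0 1, ?_, ?_⟩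
    · intro x y; simp only [quad]; ring
    · simp only [disc]; ring
  have hq : ∀ x y : ℝ, quad (ttm T U V W) x y
      = U.det * V.det * quad T (x*W 0 0 + y*W 1 0) (x*W 0 1 + y*W 1 1) := by
    intro x y
    simp only [ttm, quad, Fin.sum_univ_two, Matrix.det_fin_two]
    ring
  rw [hd]
  simp only [disc, hq, h2, Matrix.det_fin_two W]
  ring

lemma orbit_invariants {T T' : Tensor222} (U V W : Matrix (Fin 2) (Fin 2) ℝ)
    (hU : IsUnit U.det) (hV : IsUnit V.det) (hW : IsUnit W.det) (h : ttm T U V W = T') :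
    (P1 T ↔ P1 T') ∧ (P2 T ↔ P2 T') ∧ (P3 T ↔ P3 T') ∧ (T = 0 ↔ T' = 0) ∧
      ∃ s : ℝ, 0 < s ∧ disc T' = s * disc T := by
  have hinv : ttm T' U⁻¹ V⁻¹ W⁻¹ = T := by
    rw [← h, ttm_ttm, Matrix.nonsing_inv_mul U hU, Matrix.nonsing_inv_mul V hV,
      Matrix.nonsing_inv_mul W hW, ttm_one]
  refine ⟨⟨fun p => by rw [← h]; exact P1_ttm _ _ _ _ p,
      fun p => by rw [← hinv]; exact P1_ttm _ _ _ _ p⟩,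
    ⟨fun p => by rw [← h]; exact P2_ttm _ _ _ _ p,
      fun p => by rw [← hinv]; exact P2_ttm _ _ _ _ p⟩,
    ⟨fun p => by rw [← h]; exact P3_ttm _ _ _ _ p,
      fun p => by rw [← hinv]; exact P3_ttm _ _ _ _ p⟩,
    ⟨fun hz => by rw [← h, hz, ttm_zero],
      fun hz => by rw [← hinv, hz, ttm_zero]⟩, ?_⟩
  have hne : U.det * V.det * W.det ≠ 0 :=
    mul_ne_zero (mul_ne_zero hU.ne_zero hV.ne_zero) hW.ne_zero
  refine ⟨(U.det*V.det*W.det)^2, ?_, by rw [← h, disc_ttm]⟩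
  exact lt_of_le_of_ne (sq_nonneg _) (Ne.symm (pow_ne_zero 2 hne))

lemma rank1_minor (p q r s : ℝ) : (p*r)*(q*s) - (p*s)*(q*r) = 0 := by ring

/-! ### Concrete facts about the canonical forms -/

lemma ne0_G3 : ¬ (G3 = (0:Tensor222)) := fun h => by
  have := congrFun (congrFun (congrFun h 0) 0) 0; norm_num [G3] at this
lemma ne0_G2 : ¬ (G2 = (0:Tensor222)) := fun h => by
  have := congrFun (congrFun (congrFun h 0) 0) 0; norm_num [G2] at this
lemma ne0_D3 : ¬ (D3 = (0:Tensor222)) := fun h => by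
  have := congrFun (congrFun (congrFun h 0) 0) 0; norm_num [D3] at this
lemma ne0_D2 : ¬ (D2 = (0:Tensor222)) := fun h => by
  have := congrFun (congrFun (congrFun h 0) 0) 0; norm_num [D2] at this
lemma ne0_D2' : ¬ (D2' = (0:Tensor222)) := fun h => by
  have := congrFun (congrFun (congrFun h 0) 0) 0; norm_num [D2'] at this
lemma ne0_D2'' : ¬ (D2'' = (0:Tensor222)) := fun h => by
  have := congrFun (congrFun (congrFun h 0) 0) 0; norm_num [D2''] at this
lemma ne0_D1 : ¬ (D1 = (0:Tensor222)) := fun h => by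
  have := congrFun (congrFun (congrFun h 0) 0) 0; norm_num [D1] at this
lemma eq0_D0 : D0 = (0:Tensor222) := by
  funext i j k
  fin_cases i <;> fin_cases j <;> fin_cases k <;> simp [D0]

/- positive rank-one-flattening facts -/
lemma p1_D2' : P1 D2' := by
  refine ⟨![1,0], ![![1,0],![0,1]], ?_⟩
  intro i j k; fin_cases i <;> fin_cases j <;> fin_cases k <;> norm_num [D2']
lemma p1_D1 : P1 D1 := by
  refine ⟨![1,0], ![![1,0],![0,0]], ?_⟩
  intro i j k; fin_cases i <;> fin_cases j <;> fin_cases k <;> norm_num [D1]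
lemma p1_D0 : P1 D0 := by
  refine ⟨0, 0, ?_⟩
  intro i j k; fin_cases i <;> fin_cases j <;> fin_cases k <;> simp [D0]
lemma p2_D2'' : P2 D2'' := by
  refine ⟨![1,0], ![![1,0],![0,1]], ?_⟩
  intro i j k; fin_cases i <;> fin_cases j <;> fin_cases k <;> norm_num [D2'']
lemma p2_D1 : P2 D1 := by
  refine ⟨![1,0], ![![1,0],![0,0]], ?_⟩
  intro i j k; fin_cases i <;> fin_cases j <;> fin_cases k <;> norm_num [D1]
lemma p2_D0 : P2 D0 := by
  refine ⟨0, 0, ?_⟩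
  intro i j k; fin_cases i <;> fin_cases j <;> fin_cases k <;> simp [D0]
lemma p3_D2 : P3 D2 := by
  refine ⟨![1,0], ![![1,0],![0,1]], ?_⟩
  intro i j k; fin_cases i <;> fin_cases j <;> fin_cases k <;> norm_num [D2]
lemma p3_D1 : P3 D1 := by
  refine ⟨![1,0], ![![1,0],![0,0]], ?_⟩
  intro i j k; fin_cases i <;> fin_cases j <;> fin_cases k <;> norm_num [D1]
lemma p3_D0 : P3 D0 := by
  refine ⟨0, 0, ?_⟩
  intro i j k; fin_cases i <;> fin_cases j <;> fin_cases k <;> simp [D0]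

/- negative rank-one-flattening facts -/
lemma np1_G3 : ¬ P1 G3 := by
  rintro ⟨a, M, h⟩
  have e := rank1_minor (a 0) (a 1) (M 0 0) (M 0 1)
  rw [← h 0 0 0, ← h 1 0 1, ← h 0 0 1, ← h 1 0 0] at e
  norm_num [G3] at e
lemma np1_G2 : ¬ P1 G2 := by
  rintro ⟨a, M, h⟩
  have e := rank1_minor (a 0) (a 1) (M 0 0) (M 1 1)
  rw [← h 0 0 0, ← h 1 1 1, ← h 0 1 1, ← h 1 0 0] at e
  norm_num [G2] at e
lemma np1_D3 : ¬ P1 D3 := by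
  rintro ⟨a, M, h⟩
  have e := rank1_minor (a 0) (a 1) (M 0 0) (M 0 1)
  rw [← h 0 0 0, ← h 1 0 1, ← h 0 0 1, ← h 1 0 0] at e
  norm_num [D3] at e
lemma np1_D2 : ¬ P1 D2 := by
  rintro ⟨a, M, h⟩
  have e := rank1_minor (a 0) (a 1) (M 0 0) (M 1 0)
  rw [← h 0 0 0, ← h 1 1 0, ← h 0 1 0, ← h 1 0 0] at e
  norm_num [D2] at e
lemma np1_D2'' : ¬ P1 D2'' := by
  rintro ⟨a, M, h⟩
  have e := rank1_minor (a 0) (a 1) (M 0 0) (M 0 1)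
  rw [← h 0 0 0, ← h 1 0 1, ← h 0 0 1, ← h 1 0 0] at e
  norm_num [D2''] at e
lemma np2_G3 : ¬ P2 G3 := by
  rintro ⟨a, M, h⟩
  have e := rank1_minor (a 0) (a 1) (M 0 0) (M 0 1)
  rw [← h 0 0 0, ← h 0 1 1, ← h 0 0 1, ← h 0 1 0] at e
  norm_num [G3] at e
lemma np2_G2 : ¬ P2 G2 := by
  rintro ⟨a, M, h⟩
  have e := rank1_minor (a 0) (a 1) (M 0 0) (M 1 1)
  rw [← h 0 0 0, ← h 1 1 1, ← h 1 0 1, ← h 0 1 0] at e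
  norm_num [G2] at e
lemma np2_D3 : ¬ P2 D3 := by
  rintro ⟨a, M, h⟩
  have e := rank1_minor (a 0) (a 1) (M 0 0) (M 0 1)
  rw [← h 0 0 0, ← h 0 1 1, ← h 0 0 1, ← h 0 1 0] at e
  norm_num [D3] at e
lemma np2_D2 : ¬ P2 D2 := by
  rintro ⟨a, M, h⟩
  have e := rank1_minor (a 0) (a 1) (M 0 0) (M 1 0)
  rw [← h 0 0 0, ← h 1 1 0, ← h 1 0 0, ← h 0 1 0] at e
  norm_num [D2] at e
lemma np2_D2' : ¬ P2 D2' := by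
  rintro ⟨a, M, h⟩
  have e := rank1_minor (a 0) (a 1) (M 0 0) (M 0 1)
  rw [← h 0 0 0, ← h 0 1 1, ← h 0 0 1, ← h 0 1 0] at e
  norm_num [D2'] at e
lemma np3_G3 : ¬ P3 G3 := by
  rintro ⟨a, M, h⟩
  have e := rank1_minor (a 0) (a 1) (M 0 0) (M 0 1)
  rw [← h 0 0 0, ← h 0 1 1, ← h 0 1 0, ← h 0 0 1] at e
  norm_num [G3] at e
lemma np3_G2 : ¬ P3 G2 := by
  rintro ⟨a, M, h⟩
  have e := rank1_minor (a 0) (a 1) (M 0 0) (M 1 1)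
  rw [← h 0 0 0, ← h 1 1 1, ← h 1 1 0, ← h 0 0 1] at e
  norm_num [G2] at e
lemma np3_D3 : ¬ P3 D3 := by
  rintro ⟨a, M, h⟩
  have e := rank1_minor (a 0) (a 1) (M 0 0) (M 0 1)
  rw [← h 0 0 0, ← h 0 1 1, ← h 0 1 0, ← h 0 0 1] at e
  norm_num [D3] at e
lemma np3_D2' : ¬ P3 D2' := by
  rintro ⟨a, M, h⟩
  have e := rank1_minor (a 0) (a 1) (M 0 0) (M 0 1)
  rw [← h 0 0 0, ← h 0 1 1, ← h 0 1 0, ← h 0 0 1] at e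
  norm_num [D2'] at e
lemma np3_D2'' : ¬ P3 D2'' := by
  rintro ⟨a, M, h⟩
  have e := rank1_minor (a 0) (a 1) (M 0 0) (M 1 0)
  rw [← h 0 0 0, ← h 1 0 1, ← h 1 0 0, ← h 0 0 1] at e
  norm_num [D2''] at e

/- hyperdeterminant values -/
lemma disc_G3 : disc G3 = -4 := by norm_num [disc, quad, G3]
lemma disc_G2 : disc G2 = 1 := by norm_num [disc, quad, G2]
lemma disc_D3 : disc D3 = 0 := by norm_num [disc, quad, D3]
lemma disc_D2 : disc D2 = 0 := by norm_num [disc, quad, D2]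
lemma disc_D2' : disc D2' = 0 := by norm_num [disc, quad, D2']
lemma disc_D2'' : disc D2'' = 0 := by norm_num [disc, quad, D2'']
lemma disc_D1 : disc D1 = 0 := by norm_num [disc, quad, D1]
lemma disc_D0 : disc D0 = 0 := by norm_num [disc, quad, D0]

/-- No two distinct canonical forms lie in the same orbit of the multi-TTM action of
invertible matrices. -/
theorem canonical_forms_distinct_orbits :
    ∀ G ∈ [G3, G2, D3, D2, D2', D2'', D1, D0],
      ∀ G' ∈ [G3, G2, D3, D2, D2', D2'', D1, D0],
        G ≠ G' →
          ¬∃ U V W : Matrix (Fin 2) (Fin 2) ℝ,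
            IsUnit U.det ∧ IsUnit V.det ∧ IsUnit W.det ∧ ttm G U V W = G' := by
  intro G hG G' hG' hne hex
  obtain ⟨U, V, W, hU, hV, hW, h⟩ := hex
  obtain ⟨h1, h2, h3, hz, s, hs, hd⟩ := orbit_invariants U V W hU hV hW h
  simp only [List.mem_cons, List.not_mem_nil, or_false] at hG hG'
  rcases hG with rfl|rfl|rfl|rfl|rfl|rfl|rfl|rfl <;>
    rcases hG' with rfl|rfl|rfl|rfl|rfl|rfl|rfl|rfl <;>
      first
        | exact hne rfl
        | (simp only [p1_D2', p1_D1, p1_D0, p2_D2'', p2_D1, p2_D0, p3_D2, p3_D1, p3_D0,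
            np1_G3, np1_G2, np1_D3, np1_D2, np1_D2'', np2_G3, np2_G2, np2_D3, np2_D2, np2_D2',
            np3_G3, np3_G2, np3_D3, np3_D2', np3_D2'', ne0_G3, ne0_G2, ne0_D3, ne0_D2,
            ne0_D2', ne0_D2'', ne0_D1, eq0_D0, disc_G3, disc_G2, disc_D3, disc_D2, disc_D2',
            disc_D2'', disc_D1, disc_D0, iff_true, iff_false, true_iff, false_iff,
            not_true, not_false_iff] at h1 h2 h3 hz hd
           all_goals nlinarith [hs, hd])
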